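/- Let S be a positive-integer-valued random variable with increasing hazard rate μ (IHR) and finite mean. Then for every n ≥ 1, E[min{S, n}] ≥ E[S] · P(S ≤ n). Equivalently, for any c ≥ 0, the map n ↦ P(S ≤ n)/(c + E[min{S, n}]) is bounded above by 1/(c + E[S]), so its supremum over n (including the limit n → ∞) equals 1/(c + E[S]). -/
import Mathlib


open MeasureTheory Filter

/-- Survival probability `P(S ≥ n+1)`. -/
noncomputable def surv {Ω : Type*} [MeasurableSpace Ω] (P : Measure Ω) (S : Ω → ℕ) (n : ℕ) : ℝ :=
  (P {ω | n + 1 ≤ S ω}).toReal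

/-- Discrete hazard rate `μ(n) = P(S = n+1 | S ≥ n+1)`. -/
noncomputable def haz {Ω : Type*} [MeasurableSpace Ω] (P : Measure Ω) (S : Ω → ℕ) (n : ℕ) : ℝ :=
  (P {ω | S ω = n + 1}).toReal / surv P S n

section aux

variable {Ω : Type*} [MeasurableSpace Ω]

lemma surv_nonneg' (P : Measure Ω) (S : Ω → ℕ) (n : ℕ) : 0 ≤ surv P S n :=
  ENNReal.toReal_nonneg

lemma surv_antitone' (P : Measure Ω) [IsFiniteMeasure P] (S : Ω → ℕ) :
    Antitone (surv P S) := by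
  intro a b hab
  refine ENNReal.toReal_mono (measure_ne_top _ _) (measure_mono fun ω hω => ?_)
  simp only [Set.mem_setOf_eq] at hω ⊢
  omega

lemma surv_zero' (P : Measure Ω) [IsProbabilityMeasure P] (S : Ω → ℕ)
    (hS1 : ∀ ω, 1 ≤ S ω) : surv P S 0 = 1 := by
  have : {ω | 0 + 1 ≤ S ω} = Set.univ := by
    ext ω; simp [hS1 ω]
  simp [surv, this]

lemma meas_ge' {S : Ω → ℕ} (hS : Measurable S) (n : ℕ) :
    MeasurableSet {ω | n ≤ S ω} := hS measurableSet_Ici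

lemma surv_rec (P : Measure Ω) [IsFiniteMeasure P] {S : Ω → ℕ} (hS : Measurable S) (n : ℕ) :
    surv P S n = (P {ω | S ω = n + 1}).toReal + surv P S (n + 1) := by
  have hset : {ω | n + 1 ≤ S ω} = {ω | S ω = n + 1} ∪ {ω | n + 1 + 1 ≤ S ω} := by
    ext ω; simp only [Set.mem_setOf_eq, Set.mem_union]; omega
  have hdisj : Disjoint {ω | S ω = n + 1} {ω | n + 1 + 1 ≤ S ω} := by
    rw [Set.disjoint_left]; intro ω h1 h2
    simp only [Set.mem_setOf_eq] at h1 h2; omega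
  have hu := measure_union (μ := P) hdisj (meas_ge' hS (n + 1 + 1))
  rw [surv, surv, hset, hu, ENNReal.toReal_add (measure_ne_top _ _) (measure_ne_top _ _)]

lemma haz_nonneg' (P : Measure Ω) (S : Ω → ℕ) (n : ℕ) : 0 ≤ haz P S n :=
  div_nonneg ENNReal.toReal_nonneg ENNReal.toReal_nonneg

lemma haz_le_one' (P : Measure Ω) [IsFiniteMeasure P] (S : Ω → ℕ) (n : ℕ) :
    haz P S n ≤ 1 := by
  rcases eq_or_lt_of_le (surv_nonneg' P S n) with h | h
  · simp [haz, ← h]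
  · rw [haz, div_le_one h]
    exact ENNReal.toReal_mono (measure_ne_top _ _)
      (measure_mono fun ω hω => by simp only [Set.mem_setOf_eq] at *; omega)

lemma surv_succ (P : Measure Ω) [IsFiniteMeasure P] {S : Ω → ℕ} (hS : Measurable S) (n : ℕ) :
    surv P S (n + 1) = surv P S n * (1 - haz P S n) := by
  have hrec := surv_rec P hS n
  rcases eq_or_lt_of_le (surv_nonneg' P S n) with h | h
  · have h0 : (0:ℝ) ≤ (P {ω | S ω = n + 1}).toReal := ENNReal.toReal_nonneg
    have h1 : (0:ℝ) ≤ surv P S (n + 1) := surv_nonneg' P S (n + 1)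
    have h2 : surv P S (n + 1) = 0 := by linarith [hrec, h.symm]
    rw [h2, ← h]; ring
  · rw [haz]
    field_simp
    linarith

lemma haz_chain (P : Measure Ω) [IsFiniteMeasure P] (S : Ω → ℕ)
    (hIHR : ∀ n, 0 < surv P S (n + 1) → haz P S n ≤ haz P S (n + 1)) :
    ∀ d n, 0 < surv P S (n + d) → haz P S n ≤ haz P S (n + d) := by
  intro d
  induction d with
  | zero => intro n _; simp
  | succ d ih =>
    intro n h
    have h' : 0 < surv P S (n + d) :=
      lt_of_lt_of_le h (surv_antitone' P S (by omega))
    have h1 := ih n h'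
    have h2 := hIHR (n + d) (by rwa [show n + d + 1 = n + (d + 1) from rfl])
    calc haz P S n ≤ haz P S (n + d) := h1
      _ ≤ haz P S (n + d + 1) := h2
      _ = haz P S (n + (d + 1)) := by ring_nf

lemma surv_nbu (P : Measure Ω) [IsProbabilityMeasure P] {S : Ω → ℕ} (hS : Measurable S)
    (hS1 : ∀ ω, 1 ≤ S ω)
    (hIHR : ∀ n, 0 < surv P S (n + 1) → haz P S n ≤ haz P S (n + 1)) :
    ∀ a b, surv P S (a + b) ≤ surv P S a * surv P S b := by
  intro a b
  induction b with
  | zero => rw [surv_zero' P S hS1]; simp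
  | succ b ih =>
    have hba : surv P S (a + (b + 1)) = surv P S (a + b) * (1 - haz P S (a + b)) := by
      rw [show a + (b + 1) = (a + b) + 1 from rfl, surv_succ P hS]
    have hbb : surv P S (b + 1) = surv P S b * (1 - haz P S b) := surv_succ P hS b
    rcases eq_or_lt_of_le (surv_nonneg' P S (a + b)) with h | h
    · have h1 : surv P S (a + (b + 1)) = 0 := by rw [hba, ← h]; ring
      rw [h1]
      exact mul_nonneg (surv_nonneg' P S a) (surv_nonneg' P S (b + 1))
    · have hch : haz P S b ≤ haz P S (a + b) := by
        have h2 := haz_chain P S hIHR a b (by rwa [Nat.add_comm b a])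
        rwa [Nat.add_comm b a] at h2
      have h1m : (0:ℝ) ≤ 1 - haz P S (a + b) := by linarith [haz_le_one' P S (a + b)]
      have hprod : (0:ℝ) ≤ surv P S a * surv P S b :=
        mul_nonneg (surv_nonneg' P S a) (surv_nonneg' P S b)
      calc surv P S (a + (b + 1))
          = surv P S (a + b) * (1 - haz P S (a + b)) := hba
        _ ≤ (surv P S a * surv P S b) * (1 - haz P S (a + b)) :=
            mul_le_mul_of_nonneg_right ih h1m
        _ ≤ (surv P S a * surv P S b) * (1 - haz P S b) := by
            apply mul_le_mul_of_nonneg_left _ hprod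
            linarith
        _ = surv P S a * surv P S (b + 1) := by rw [hbb]; ring

end aux

/-- For IHR `S` with finite mean: `E[min{S,n}] ≥ E[S]·P(S ≤ n)` for all `n ≥ 1`; equivalently,
for any `c ≥ 0` the map `n ↦ P(S ≤ n)/(c + E[min{S,n}])` is bounded by `1/(c + E[S])` and its
supremum over `n` (including the limit `n → ∞`) equals `1/(c + E[S])`. -/
theorem IHR_gittins_quotient_sup {Ω : Type*} [MeasurableSpace Ω] (P : Measure Ω)
    [IsProbabilityMeasure P] (S : Ω → ℕ) (hS : Measurable S) (hS1 : ∀ ω, 1 ≤ S ω)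
    (hIHR : ∀ n, 0 < surv P S (n + 1) → haz P S n ≤ haz P S (n + 1))
    (hInt : Integrable (fun ω => (S ω : ℝ)) P) :
    (∀ n : ℕ, 1 ≤ n →
      (∫ ω, (S ω : ℝ) ∂P) * (P {ω | S ω ≤ n}).toReal ≤
        ∫ ω, ((min (S ω) n : ℕ) : ℝ) ∂P) ∧
    ∀ c : ℝ, 0 ≤ c →
      (∀ n : ℕ,
        (P {ω | S ω ≤ n}).toReal / (c + ∫ ω, ((min (S ω) n : ℕ) : ℝ) ∂P) ≤
          1 / (c + ∫ ω, (S ω : ℝ) ∂P)) ∧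
      Tendsto
        (fun n : ℕ => (P {ω | S ω ≤ n}).toReal / (c + ∫ ω, ((min (S ω) n : ℕ) : ℝ) ∂P))
        atTop (nhds (1 / (c + ∫ ω, (S ω : ℝ) ∂P))) ∧
      (⨆ n : ℕ, (P {ω | S ω ≤ n}).toReal / (c + ∫ ω, ((min (S ω) n : ℕ) : ℝ) ∂P)) =
        1 / (c + ∫ ω, (S ω : ℝ) ∂P) := by
  set M : ℝ := ∫ ω, (S ω : ℝ) ∂P with hM
  set p : ℕ → ℝ := surv P S with hp
  have hpnn : ∀ n, 0 ≤ p n := surv_nonneg' P S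
  have hmeasge : ∀ n : ℕ, MeasurableSet {ω | n ≤ S ω} := meas_ge' hS
  -- integral of min equals partial sum of survival probabilities
  have hmin : ∀ n : ℕ, ∫ ω, ((min (S ω) n : ℕ) : ℝ) ∂P = ∑ i ∈ Finset.range n, p i := by
    intro n
    have hfun : (fun ω => ((min (S ω) n : ℕ) : ℝ)) =
        fun ω => ∑ i ∈ Finset.range n,
          Set.indicator {ω | i + 1 ≤ S ω} (1 : Ω → ℝ) ω := by
      funext ω
      simp only [Set.indicator_apply, Set.mem_setOf_eq, Pi.one_apply]
      rw [Finset.sum_boole]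
      have hfil : Finset.filter (fun i => i + 1 ≤ S ω) (Finset.range n)
          = Finset.range (min (S ω) n) := by
        ext i
        simp only [Finset.mem_filter, Finset.mem_range, lt_min_iff]
        omega
      rw [hfil, Finset.card_range]
    rw [hfun, integral_finset_sum]
    · refine Finset.sum_congr rfl fun i _ => ?_
      rw [integral_indicator_one (hmeasge (i + 1))]
      rfl
    · intro i _
      exact (integrable_const (1:ℝ)).indicator (hmeasge (i + 1))
  -- partial sums tend to M (dominated convergence)
  have htendM : Tendsto (fun n => ∑ i ∈ Finset.range n, p i) atTop (nhds M) := by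
    have h1 : Tendsto (fun n => ∫ ω, ((min (S ω) n : ℕ) : ℝ) ∂P) atTop (nhds M) := by
      apply tendsto_integral_of_dominated_convergence (fun ω => (S ω : ℝ))
      · intro n
        exact (measurable_from_top.comp (hS.min measurable_const)).aestronglyMeasurable
      · exact hInt
      · intro n
        filter_upwards with ω
        rw [Real.norm_eq_abs, abs_of_nonneg (by positivity)]
        exact_mod_cast min_le_left _ _
      · filter_upwards with ω
        have hEq : (fun n : ℕ => ((min (S ω) n : ℕ) : ℝ)) =ᶠ[atTop]
            fun _ => (S ω : ℝ) := by
          filter_upwards [eventually_ge_atTop (S ω)] with n hn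
          rw [min_eq_left hn]
        exact Tendsto.congr' hEq.symm tendsto_const_nhds
    exact h1.congr fun n => hmin n
  have hHasSum : HasSum p M := (hasSum_iff_tendsto_nat_of_nonneg hpnn M).2 htendM
  have hSumm : Summable p := hHasSum.summable
  have htsum : ∑' i, p i = M := hHasSum.tsum_eq
  have hp0 : p 0 = 1 := surv_zero' P S hS1
  have hM1 : (1:ℝ) ≤ M := by
    rw [← htsum, ← hp0]
    exact Summable.le_tsum hSumm 0 fun j _ => hpnn j
  -- P(S ≤ n) = 1 - p n
  have hPle : ∀ n : ℕ, (P {ω | S ω ≤ n}).toReal = 1 - p n := by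
    intro n
    have hset : {ω | S ω ≤ n} = {ω | n + 1 ≤ S ω}ᶜ := by
      ext ω; simp only [Set.mem_setOf_eq, Set.mem_compl_iff]; omega
    rw [hset, prob_compl_eq_one_sub (hmeasge (n + 1)),
      ENNReal.toReal_sub_of_le prob_le_one ENNReal.one_ne_top]
    simp [hp, surv]
  -- key inequality: M * (1 - p n) ≤ partial sum
  have hkey : ∀ n : ℕ, M * (1 - p n) ≤ ∑ i ∈ Finset.range n, p i := by
    intro n
    have htail : ∑' i, p (i + n) = M - ∑ i ∈ Finset.range n, p i := by
      have := Summable.sum_add_tsum_nat_add (f := p) n hSumm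
      rw [htsum] at this; linarith
    have htailSumm : Summable fun i => p (i + n) := (summable_nat_add_iff n).2 hSumm
    have hbd : ∑' i, p (i + n) ≤ p n * M := by
      calc ∑' i, p (i + n) ≤ ∑' i, p n * p i := by
            apply Summable.tsum_le_tsum _ htailSumm (hSumm.mul_left _)
            intro i
            have hni := surv_nbu P hS hS1 hIHR n i
            rwa [Nat.add_comm n i] at hni
        _ = p n * ∑' i, p i := tsum_mul_left
        _ = p n * M := by rw [htsum]
    rw [htail] at hbd
    nlinarith
  -- first conjunct
  have hmain : ∀ n : ℕ, M * (P {ω | S ω ≤ n}).toReal ≤ ∫ ω, ((min (S ω) n : ℕ) : ℝ) ∂P := by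
    intro n
    rw [hPle n, hmin n]
    exact hkey n
  refine ⟨fun n _ => hmain n, fun c hc => ?_⟩
  have hMpos : 0 < c + M := by linarith
  have hmnn : ∀ n, 0 ≤ ∫ ω, ((min (S ω) n : ℕ) : ℝ) ∂P := by
    intro n; rw [hmin n]; exact Finset.sum_nonneg fun i _ => hpnn i
  have hbound : ∀ n : ℕ,
      (P {ω | S ω ≤ n}).toReal / (c + ∫ ω, ((min (S ω) n : ℕ) : ℝ) ∂P) ≤ 1 / (c + M) := by
    intro n
    set m := ∫ ω, ((min (S ω) n : ℕ) : ℝ) ∂P with hm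
    rcases eq_or_lt_of_le (by linarith [hmnn n] : (0:ℝ) ≤ c + m) with h | h
    · rw [← h, div_zero]
      positivity
    · rw [div_le_div_iff₀ h hMpos, hPle n]
      have h1 := hmain n
      rw [hPle n] at h1
      have h2 := hpnn n
      have h3 : p n ≤ 1 := by rw [← hp0]; exact surv_antitone' P S (Nat.zero_le n)
      nlinarith
  have htendsto : Tendsto
      (fun n : ℕ => (P {ω | S ω ≤ n}).toReal / (c + ∫ ω, ((min (S ω) n : ℕ) : ℝ) ∂P))
      atTop (nhds (1 / (c + M))) := by
    have hnum : Tendsto (fun n : ℕ => (P {ω | S ω ≤ n}).toReal) atTop (nhds 1) := by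
      have hp0' : Tendsto p atTop (nhds 0) := hSumm.tendsto_atTop_zero
      have : Tendsto (fun n => 1 - p n) atTop (nhds (1 - 0)) :=
        tendsto_const_nhds.sub hp0'
      rw [sub_zero] at this
      exact this.congr fun n => (hPle n).symm
    have hden : Tendsto (fun n : ℕ => c + ∫ ω, ((min (S ω) n : ℕ) : ℝ) ∂P) atTop
        (nhds (c + M)) := by
      have : Tendsto (fun n : ℕ => ∫ ω, ((min (S ω) n : ℕ) : ℝ) ∂P) atTop (nhds M) :=
        htendM.congr fun n => (hmin n).symm
      exact tendsto_const_nhds.add this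
    exact hnum.div hden (ne_of_gt hMpos)
  refine ⟨hbound, htendsto, ?_⟩
  have hbdd : BddAbove (Set.range fun n : ℕ =>
      (P {ω | S ω ≤ n}).toReal / (c + ∫ ω, ((min (S ω) n : ℕ) : ℝ) ∂P)) := by
    refine ⟨1 / (c + M), ?_⟩
    rintro x ⟨n, rfl⟩
    exact hbound n
  apply le_antisymm
  · exact ciSup_le hbound
  · refine le_of_tendsto htendsto (Eventually.of_forall fun n => ?_)
    exact le_ciSup hbdd n
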